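/- Every finite SL(2,ℤ)-orbit in the torus ℝ²/ℤ² equals the orbit O_{1/p} of the point (0, 1/p) mod ℤ² for some integer p ≥ 1. -/

import Mathlib

/-- The integer lattice `ℤ² ⊂ ℝ²`, as an additive subgroup of `Fin 2 → ℝ`. -/
def intLattice : AddSubgroup (Fin 2 → ℝ) where
  carrier := {v | ∀ i, ∃ n : ℤ, v i = (n : ℝ)}
  zero_mem' := fun i => ⟨0, by simp⟩
  add_mem' := by
    intro a b ha hb i
    obtain ⟨n, hn⟩ := ha i
    obtain ⟨m, hm⟩ := hb i
    exact ⟨n + m, by simp [hn, hm]⟩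
  neg_mem' := by
    intro a ha i
    obtain ⟨n, hn⟩ := ha i
    exact ⟨-n, by simp [hn]⟩

/-- The torus `ℝ²/ℤ²`. -/
abbrev Torus : Type := (Fin 2 → ℝ) ⧸ intLattice

/-- The natural action of `SL(2,ℤ)` on `ℝ²` by matrix multiplication on column vectors. -/
noncomputable def sl2zAct (A : Matrix.SpecialLinearGroup (Fin 2) ℤ) (v : Fin 2 → ℝ) :
    Fin 2 → ℝ :=
  ((A : Matrix (Fin 2) (Fin 2) ℤ).map fun n => (n : ℝ)).mulVec v

/-- The `SL(2,ℤ)`-orbit of the torus point represented by `v ∈ ℝ²`. -/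
def torusOrbit (v : Fin 2 → ℝ) : Set Torus :=
  {x | ∃ A : Matrix.SpecialLinearGroup (Fin 2) ℤ,
    (QuotientAddGroup.mk (sl2zAct A v) : Torus) = x}

/-! A finite orbit forces `v ∈ ℚ²`: by pigeonhole two of the points `Tᵏ v = (v₀ + k v₁, v₁)`
agree mod `ℤ²`, so `v₁` is rational, and `S` exchanges the coordinates up to sign. Write
`v = s • w` with `w ∈ ℤ²`; some `A ∈ SL(2,ℤ)` sends `w` to `(0, gcd w)`, so the orbit is that of
`(0, q)` with `q = c / p ∈ ℚ` in lowest terms. If `u c ≡ 1 mod p`, the vector `(p, u)` is primitive,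
so some `A` sends it to `(0, 1)`, and therefore sends `q • (p, u) = (c, u c / p) ≡ (0, 1 / p)`
to `(0, q)`. -/

open Matrix
open scoped MatrixGroups

section Action

variable (A B : SL(2, ℤ)) (v : Fin 2 → ℝ)

lemma sl2zAct_one : sl2zAct 1 v = v := by
  simp [sl2zAct]

lemma sl2zAct_mul : sl2zAct (A * B) v = sl2zAct A (sl2zAct B v) := by
  rw [sl2zAct, sl2zAct, sl2zAct, mulVec_mulVec]
  exact congrArg (· *ᵥ v) (Matrix.map_mul (f := Int.castRingHom ℝ))

lemma sl2zAct_smul (s : ℝ) : sl2zAct A (s • v) = s • sl2zAct A v :=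
  mulVec_smul _ s v

lemma sl2zAct_intCast (w : Fin 2 → ℤ) : sl2zAct A (Int.cast ∘ w) = Int.cast ∘ (A *ᵥ w) :=
  funext fun i => (RingHom.map_mulVec (Int.castRingHom ℝ) _ w i).symm

lemma sl2zAct_T_zpow (k : ℤ) : sl2zAct (ModularGroup.T ^ k) v = ![v 0 + k * v 1, v 1] := by
  funext i
  fin_cases i <;> simp [sl2zAct, ModularGroup.coe_T_zpow, mulVec, dotProduct, Fin.sum_univ_two]

lemma sl2zAct_S : sl2zAct ModularGroup.S v = ![-v 1, v 0] := by
  funext i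
  fin_cases i <;> simp [sl2zAct, ModularGroup.coe_S, mulVec, dotProduct, Fin.sum_univ_two]

end Action

lemma intCast_comp_mem_intLattice (w : Fin 2 → ℤ) :
    (Int.cast ∘ w : Fin 2 → ℝ) ∈ intLattice :=
  fun i => ⟨w i, rfl⟩

lemma sl2zAct_mem_intLattice (A : SL(2, ℤ)) {v : Fin 2 → ℝ} (hv : v ∈ intLattice) :
    sl2zAct A v ∈ intLattice := by
  choose w hw using hv
  rw [show v = Int.cast ∘ w from funext hw, sl2zAct_intCast]
  exact intCast_comp_mem_intLattice _

lemma mk_sl2zAct_eq_mk_sl2zAct (A : SL(2, ℤ)) {v w : Fin 2 → ℝ}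
    (h : (QuotientAddGroup.mk v : Torus) = QuotientAddGroup.mk w) :
    (QuotientAddGroup.mk (sl2zAct A v) : Torus) = QuotientAddGroup.mk (sl2zAct A w) := by
  rw [QuotientAddGroup.eq] at h ⊢
  simpa only [sl2zAct, mulVec_add, mulVec_neg] using sl2zAct_mem_intLattice A h

lemma torusOrbit_congr {v w : Fin 2 → ℝ}
    (h : (QuotientAddGroup.mk v : Torus) = QuotientAddGroup.mk w) :
    torusOrbit v = torusOrbit w :=
  Set.ext fun _ => exists_congr fun A => by rw [mk_sl2zAct_eq_mk_sl2zAct A h]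

lemma torusOrbit_sl2zAct (A : SL(2, ℤ)) (v : Fin 2 → ℝ) :
    torusOrbit (sl2zAct A v) = torusOrbit v := by
  ext x
  constructor
  · rintro ⟨B, rfl⟩
    exact ⟨B * A, by rw [sl2zAct_mul]⟩
  · rintro ⟨B, rfl⟩
    exact ⟨B * A⁻¹, by rw [sl2zAct_mul, ← sl2zAct_mul A⁻¹, inv_mul_cancel, sl2zAct_one]⟩

lemma exists_mulVec_eq_zero_one {a b : ℤ} (h : IsCoprime a b) :
    ∃ A : SL(2, ℤ), A *ᵥ ![a, b] = ![0, 1] := by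
  obtain ⟨x, y, hxy⟩ := h
  refine ⟨⟨!![b, -a; x, y], by simp [det_fin_two_of]; linarith⟩, ?_⟩
  funext i; fin_cases i <;> simp [mulVec, dotProduct, Fin.sum_univ_two] <;> linarith

lemma exists_mulVec_eq_zero_gcd (a b : ℤ) :
    ∃ A : SL(2, ℤ), A *ᵥ ![a, b] = ![0, gcd a b] := by
  by_cases hg : gcd a b = 0
  · obtain ⟨rfl, rfl⟩ := (gcd_eq_zero_iff a b).mp hg
    exact ⟨1, by simp⟩
  obtain ⟨A, hA⟩ := exists_mulVec_eq_zero_one (isCoprime_div_gcd_div_gcd_of_gcd_ne_zero hg)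
  have hab : ![a, b] = gcd a b • ![a / gcd a b, b / gcd a b] := by
    simp [Int.mul_ediv_cancel' (gcd_dvd_left a b), Int.mul_ediv_cancel' (gcd_dvd_right a b)]
  exact ⟨A, by rw [hab, mulVec_smul, hA]; simp⟩

lemma torusOrbit_smul_intCast (s : ℝ) (w : Fin 2 → ℤ) :
    torusOrbit (s • (Int.cast ∘ w)) = torusOrbit ![0, s * gcd (w 0) (w 1)] := by
  obtain ⟨A, hA⟩ := exists_mulVec_eq_zero_gcd (w 0) (w 1)
  rw [← torusOrbit_sl2zAct A, sl2zAct_smul, sl2zAct_intCast, show w = ![w 0, w 1] by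
    funext i; fin_cases i <;> rfl, hA]
  congr 1
  funext i; fin_cases i <;> simp

lemma torusOrbit_zero_ratCast (q : ℚ) :
    torusOrbit ![0, (q : ℝ)] = torusOrbit ![0, 1 / (q.den : ℝ)] := by
  obtain ⟨u, t, hut⟩ := Rat.isCoprime_num_den q
  obtain ⟨A, hA⟩ :=
    exists_mulVec_eq_zero_one (show IsCoprime (q.den : ℤ) u from ⟨t, q.num, by linarith⟩)
  have hq : (q : ℝ) = q.num / q.den := by exact_mod_cast (Rat.num_div_den q).symm
  have hut' : (u : ℝ) * q.num + t * q.den = 1 := by exact_mod_cast hut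
  calc torusOrbit ![0, (q : ℝ)]
      = torusOrbit ((q : ℝ) • (Int.cast ∘ ![(q.den : ℤ), u])) := by
        rw [← torusOrbit_sl2zAct A ((q : ℝ) • _), sl2zAct_smul, sl2zAct_intCast, hA]
        congr 1
        funext i; fin_cases i <;> simp
    _ = torusOrbit ![0, 1 / (q.den : ℝ)] := by
        refine torusOrbit_congr (QuotientAddGroup.eq.mpr fun i => ?_)
        fin_cases i
        · exact ⟨-q.num, by simp [hq]⟩
        · refine ⟨t, ?_⟩
          simp only [Fin.mk_one, Pi.add_apply, Pi.neg_apply, Pi.smul_apply, smul_eq_mul,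
            Function.comp_apply, cons_val_one, cons_val_fin_one, hq]
          field_simp
          linarith

lemma exists_int_mul_apply_one_eq_intCast_of_finite {v : Fin 2 → ℝ} (hfin : (torusOrbit v).Finite) :
    ∃ m k : ℤ, m ≠ 0 ∧ m * v 1 = k := by
  have hmaps : Set.MapsTo
      (fun k : ℤ => (QuotientAddGroup.mk (sl2zAct (ModularGroup.T ^ k) v) : Torus))
      Set.univ (torusOrbit v) := fun k _ => ⟨_, rfl⟩
  obtain ⟨k, -, l, -, hkl, heq⟩ := Set.infinite_univ.exists_ne_map_eq_of_mapsTo hmaps hfin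
  obtain ⟨j, hj⟩ := QuotientAddGroup.eq.mp heq 0
  refine ⟨l - k, j, sub_ne_zero.mpr hkl.symm, ?_⟩
  rw [← hj]
  simp only [sl2zAct_T_zpow, Pi.add_apply, Pi.neg_apply, cons_val_zero]
  push_cast
  ring

lemma exists_eq_inv_smul_intCast_of_finite {v : Fin 2 → ℝ} (hfin : (torusOrbit v).Finite) :
    ∃ (n : ℤ) (w : Fin 2 → ℤ), v = (n : ℝ)⁻¹ • (Int.cast ∘ w) := by
  obtain ⟨m₁, k₁, hm₁, h₁⟩ := exists_int_mul_apply_one_eq_intCast_of_finite hfin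
  obtain ⟨m₀, k₀, hm₀, h₀⟩ := exists_int_mul_apply_one_eq_intCast_of_finite
    (v := sl2zAct ModularGroup.S v) (by rwa [torusOrbit_sl2zAct])
  simp only [sl2zAct_S, cons_val_one, cons_val_zero] at h₀
  refine ⟨m₀ * m₁, ![k₀ * m₁, m₀ * k₁], (eq_inv_smul_iff₀ (by positivity)).mpr ?_⟩
  funext i
  fin_cases i
  · simp only [Fin.zero_eta, Pi.smul_apply, smul_eq_mul, Function.comp_apply, cons_val_zero,
      Int.cast_mul]
    linear_combination (m₁ : ℝ) * h₀
  · simp only [Fin.mk_one, Pi.smul_apply, smul_eq_mul, Function.comp_apply, cons_val_one,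
      cons_val_fin_one, Int.cast_mul]
    linear_combination (m₀ : ℝ) * h₁

/-- Every finite `SL(2,ℤ)`-orbit in the torus `ℝ²/ℤ²` equals the orbit `O_{1/p}` of the
point `(0, 1/p) mod ℤ²` for some integer `p ≥ 1`. -/
theorem finite_orbit_eq_orbit_one_div (v : Fin 2 → ℝ) (hfin : (torusOrbit v).Finite) :
    ∃ p : ℕ, 1 ≤ p ∧ torusOrbit v = torusOrbit ![0, 1 / (p : ℝ)] := by
  obtain ⟨n, w, rfl⟩ := exists_eq_inv_smul_intCast_of_finite hfin
  let q : ℚ := (n : ℚ)⁻¹ * gcd (w 0) (w 1)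
  refine ⟨q.den, q.den_pos, ?_⟩
  rw [torusOrbit_smul_intCast, ← torusOrbit_zero_ratCast q]
  simp only [q, Rat.cast_mul, Rat.cast_inv, Rat.cast_intCast]
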